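/- arXiv:1007.3550 — 3 statements merged into one kernel-verified Lean document; each statement's English description precedes it below -/
import Mathlib

section
/- Let X be a rack and k ≥ 1. For all u, x ∈ X, u ▷ x^{▷k} = u ▷ x^{▷(k+1)} and x^{▷(k+1)} = x^{▷k} ▷ x^{▷(k+1)}; consequently, for all x₁, …, x_{i−1}, x ∈ X, (x₁ ▷ x^{▷k},…,x_{i−1} ▷ x^{▷k}, x^{▷(k+1)}) = (x₁ ▷ x^{▷(k+1)},…,x_{i−1} ▷ x^{▷(k+1)}, x^{▷k} ▷ x^{▷(k+1)}). -/
/-- A rack: a set with operations `act` (x ▷ y) and `inv` (x ▷⁻¹ y) satisfying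
(i) (x ▷ y) ▷⁻¹ y = x = (x ▷⁻¹ y) ▷ y and (ii) right self-distributivity. -/
class Rack' (X : Type*) where
  act : X → X → X
  inv : X → X → X
  act_inv : ∀ x y : X, inv (act x y) y = x
  inv_act : ∀ x y : X, act (inv x y) y = x
  distrib : ∀ x y z : X, act (act x y) z = act (act x z) (act y z)

open Rack'
/-- The kink map π(x) = x ▷ x. -/
def Rack'.kink {X : Type*} [Rack' X] (x : X) : X := Rack'.act x x

/-- Rack powers: x^{▷1} = x ▷ x and x^{▷(k+1)} = x^{▷k} ▷ x^{▷k}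
(with x^{▷0} = x as a convenient base case). -/
def Rack'.rpow {X : Type*} [Rack' X] (x : X) : ℕ → X
  | 0 => x
  | k + 1 => Rack'.act (Rack'.rpow x k) (Rack'.rpow x k)

lemma act_kink {X : Type*} [Rack' X] (u a : X) : act u (act a a) = act u a := by
  have h := distrib (inv u a) a a
  rw [inv_act] at h
  exact h.symm

theorem degenerate_tuple_shift {X : Type*} [Rack' X] {n : ℕ} (y : Fin n → X) (x : X)
    (k : ℕ) (hk : 1 ≤ k) :
    (fun j => act (y j) (rpow x k)) = (fun j => act (y j) (rpow x (k + 1))) ∧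
    (∀ u : X, act u (rpow x k) = act u (rpow x (k + 1))) ∧
    act (rpow x k) (rpow x (k + 1)) = rpow x (k + 1) := by
  have key : ∀ u : X, act u (rpow x k) = act u (rpow x (k + 1)) := by
    intro u
    show act u (rpow x k) = act u (act (rpow x k) (rpow x k))
    rw [act_kink]
  exact ⟨funext fun j => key (y j), key, (key (rpow x k)).symm⟩
end

section
/- Let X = ℤ/4ℤ with u ▷ v = u + 2v (rack rank 2). The group of 2-degenerate 2-chains C₂^{ND}(X) is generated by the elements (3,1)+(1,3), 2(2,2), and 2(4,4) (writing elements of X as 1,2,3,4 ≡ 1,2,3,0 mod 4). -/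
open FreeAbelianGroup

private lemma of_congr {a b : ZMod 4 × ZMod 4} (h : a = b) :
    FreeAbelianGroup.of a = FreeAbelianGroup.of b := by rw [h]

/-- For X = ℤ/4ℤ with u ▷ v = u + 2v (kink map π(u) = u + 2u = 3u, rack rank
N = 2), the group of 2-degenerate 2-chains, generated by the chains
Σ_{k=1}^2 (x^{▷k}, x^{▷(k+1)}) for x ∈ X, is generated by the elements
(3,1)+(1,3), 2·(2,2) and 2·(4,4) (writing 4 ≡ 0 mod 4). -/
theorem zmod4_ND2_generators :
    AddSubgroup.closure
        { c : FreeAbelianGroup (ZMod 4 × ZMod 4) | ∃ x : ZMod 4,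
          c = ∑ k ∈ Finset.Icc 1 2,
            of ((fun u : ZMod 4 => u + 2 * u)^[k] x,
                (fun u : ZMod 4 => u + 2 * u)^[k + 1] x) } =
      AddSubgroup.closure
        { of (((3 : ZMod 4), (1 : ZMod 4))) + of ((1, 3)),
          (2 : ℤ) • of (((2 : ZMod 4), (2 : ZMod 4))),
          (2 : ℤ) • of (((0 : ZMod 4), (0 : ZMod 4))) } := by
  have hIcc : Finset.Icc 1 2 = ({1,2} : Finset ℕ) := by decide
  have hset : { c : FreeAbelianGroup (ZMod 4 × ZMod 4) | ∃ x : ZMod 4,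
          c = ∑ k ∈ Finset.Icc 1 2,
            of ((fun u : ZMod 4 => u + 2 * u)^[k] x,
                (fun u : ZMod 4 => u + 2 * u)^[k + 1] x) } =
      ({ of (((3 : ZMod 4), (1 : ZMod 4))) + of ((1, 3)),
          (2 : ℤ) • of (((2 : ZMod 4), (2 : ZMod 4))),
          (2 : ℤ) • of (((0 : ZMod 4), (0 : ZMod 4))) } :
        Set (FreeAbelianGroup (ZMod 4 × ZMod 4))) := by
    ext c
    simp only [Set.mem_setOf_eq, Set.mem_insert_iff, Set.mem_singleton_iff, two_zsmul, hIcc,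
      Finset.sum_insert (by decide : (1:ℕ) ∉ ({2} : Finset ℕ)), Finset.sum_singleton,
      Function.iterate_succ, Function.iterate_zero, Function.comp_apply, id_eq,
      Function.iterate_one]
    constructor
    · rintro ⟨x, rfl⟩
      fin_cases x
      · exact Or.inr (Or.inr (congrArg₂ (· + ·) (congrArg of (by decide)) (congrArg of (by decide))))
      · exact Or.inl (congrArg₂ (· + ·) (congrArg of (by decide)) (congrArg of (by decide)))
      · exact Or.inr (Or.inl (congrArg₂ (· + ·) (congrArg of (by decide)) (congrArg of (by decide))))
      · exact Or.inl ((congrArg₂ (· + ·) (congrArg of (by decide)) (congrArg of (by decide))).trans (add_comm (of ((1 : ZMod 4), (3 : ZMod 4))) (of (3, 1))))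
    · rintro (h | h | h) <;> rw [h]
      · exact ⟨1, congrArg₂ (· + ·) (congrArg of (by decide)) (congrArg of (by decide))⟩
      · exact ⟨2, congrArg₂ (· + ·) (congrArg of (by decide)) (congrArg of (by decide))⟩
      · exact ⟨0, congrArg₂ (· + ·) (congrArg of (by decide)) (congrArg of (by decide))⟩
  rw [hset]
end

section
/- Let X = ℤ/4ℤ with u ▷ v = u + 2v. The image of ∂₂ : C₂^R(X) → C₁^R(X) is the rank-2 free abelian group generated by (1)−(3) and (2)−(4); consequently H₁^R(X) = C₁^R(X)/Im(∂₂) is free abelian of rank 2. -/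
/-! Since `i ▷ j ≡ i (mod 2)` and every `i' ≡ i` is of the form `i ▷ j`, the image of `∂₂` is
generated by the differences `(x) − (x')` of elements in the same orbit, i.e. it is the kernel of
the surjection `ℤ[ℤ/4] → ℤ[ℤ/2]` induced by reduction mod 2. Hence the quotient is `ℤ[ℤ/2] ≅ ℤ²`,
and by rank–nullity the image is free of rank `4 − 2 = 2`. -/

open FreeAbelianGroup

/-- The boundary ∂₂ : C₂^R(X) → C₁^R(X) for the rack X = ℤ/4ℤ with
u ▷ v = u + 2v: on a generator (i,j) it is (i) − (i ▷ j) = (i) − (i + 2j). -/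
noncomputable def bdry2 :
    FreeAbelianGroup (ZMod 4 × ZMod 4) →+ FreeAbelianGroup (ZMod 4) :=
  FreeAbelianGroup.lift fun p : ZMod 4 × ZMod 4 => of p.1 - of (p.1 + 2 * p.2)

namespace FreeAbelianGroup

variable {X Y A : Type*} [AddCommGroup A]

theorem range_lift_eq_closure (g : X → A) :
    (lift g).range = AddSubgroup.closure (Set.range g) := by
  apply le_antisymm
  · rintro _ ⟨z, rfl⟩
    induction z using FreeAbelianGroup.induction_on with
    | zero => simp
    | of x => exact AddSubgroup.subset_closure ⟨x, (lift_apply_of g x).symm⟩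
    | neg x hx => simpa using neg_mem hx
    | add z w hz hw => simpa using add_mem hz hw
  · rw [AddSubgroup.closure_le]
    rintro _ ⟨x, rfl⟩
    exact ⟨of x, lift_apply_of g x⟩

theorem map_surjective {f : X → Y} (hf : f.Surjective) : (map f : _ → _).Surjective :=
  fun z => ⟨map (Function.surjInv hf) z, by
    rw [← map_comp_apply, Function.comp_surjInv, map_id_apply]⟩

theorem ker_map_eq_closure {f : X → Y} (hf : f.Surjective) :
    (map f).ker = AddSubgroup.closure {z | ∃ x x', f x = f x' ∧ of x - of x' = z} := by
  apply le_antisymm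
  · intro z hz
    let s := Function.surjInv hf
    -- `z - s_* f_* z` is a combination of the generators `of x - of (s (f x))`
    have hproj : lift (fun x => of x - of (s (f x))) =
        AddMonoidHom.id _ - (map s).comp (map f) := by
      ext x
      simp [map_of_apply]
    have hrange : z - map s (map f z) ∈ (lift fun x => of x - of (s (f x))).range :=
      ⟨z, by simp [hproj]⟩
    rw [range_lift_eq_closure, AddMonoidHom.mem_ker.mp hz, map_zero, sub_zero] at hrange
    refine AddSubgroup.closure_mono ?_ hrange
    rintro _ ⟨x, rfl⟩
    exact ⟨x, s (f x), (Function.surjInv_eq hf _).symm, rfl⟩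
  · rw [AddSubgroup.closure_le]
    rintro _ ⟨x, x', h, rfl⟩
    simp [map_of_apply, h]

theorem nonempty_addEquiv_fin [Fintype X] {n : ℕ} (h : Fintype.card X = n) :
    Nonempty (FreeAbelianGroup X ≃+ (Fin n → ℤ)) :=
  ⟨((basis X).reindex (Fintype.equivFinOfCardEq h)).equivFun.toAddEquiv⟩

theorem nonempty_ker_map_addEquiv [Fintype X] [Fintype Y] {f : X → Y} (hf : f.Surjective) {m : ℕ}
    (h : Fintype.card X = m + Fintype.card Y) : Nonempty ((map f).ker ≃+ (Fin m → ℤ)) := by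
  let φ := (map f).toIntLinearMap
  have hquot : Module.finrank ℤ (_ ⧸ LinearMap.ker φ) = Fintype.card Y := by
    rw [(φ.quotKerEquivOfSurjective (map_surjective hf)).finrank_eq,
      Module.finrank_eq_card_basis (basis Y)]
  have hker : Module.finrank ℤ (LinearMap.ker φ) = m := by
    have := (LinearMap.ker φ).finrank_quotient_add_finrank
    rw [hquot, Module.finrank_eq_card_basis (basis X), h] at this
    omega
  exact ⟨(Module.finBasisOfFinrankEq ℤ _ hker).equivFun.toAddEquiv⟩

end FreeAbelianGroup

theorem zmod4_castHom_eq_iff (x x' : ZMod 4) :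
    ZMod.castHom (by norm_num) (ZMod 2) x = ZMod.castHom (by norm_num) (ZMod 2) x' ↔
      ∃ j, x + 2 * j = x' := by
  revert x x'; decide

theorem range_bdry2_eq_ker :
    bdry2.range = (map (ZMod.castHom (by norm_num : 2 ∣ 4) (ZMod 2))).ker := by
  rw [bdry2, range_lift_eq_closure, ker_map_eq_closure (ZMod.castHom_surjective _)]
  congr 1
  ext z
  constructor
  · rintro ⟨⟨i, j⟩, rfl⟩
    exact ⟨i, i + 2 * j, (zmod4_castHom_eq_iff _ _).mpr ⟨j, rfl⟩, rfl⟩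
  · rintro ⟨x, x', h, rfl⟩
    obtain ⟨j, rfl⟩ := (zmod4_castHom_eq_iff x x').mp h
    exact ⟨(x, j), rfl⟩

theorem range_bdry2 :
    bdry2.range = AddSubgroup.closure {of (1 : ZMod 4) - of 3, of (2 : ZMod 4) - of 0} := by
  set H := AddSubgroup.closure {of (1 : ZMod 4) - of 3, of (2 : ZMod 4) - of 0}
  rw [bdry2, range_lift_eq_closure]
  apply le_antisymm
  · rw [AddSubgroup.closure_le]
    rintro _ ⟨⟨i, j⟩, rfl⟩
    have hgen : ∀ x y : ZMod 4, (x, y) = (1, 3) ∨ (x, y) = (2, 0) → of x - of y ∈ H := by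
      rintro x y (h | h) <;> obtain ⟨rfl, rfl⟩ := Prod.mk.inj h
      exacts [AddSubgroup.subset_closure (Or.inl rfl), AddSubgroup.subset_closure (Or.inr rfl)]
    have hcases : i + 2 * j = i ∨ (i, i + 2 * j) = (1, 3) ∨ (i, i + 2 * j) = (2, 0) ∨
        (i + 2 * j, i) = (1, 3) ∨ (i + 2 * j, i) = (2, 0) := by
      revert i j; decide
    rcases hcases with h | h | h | h | h
    · simp [h]
    · exact hgen _ _ (Or.inl h)
    · exact hgen _ _ (Or.inr h)
    · simpa using neg_mem (hgen _ _ (Or.inl h))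
    · simpa using neg_mem (hgen _ _ (Or.inr h))
  · refine AddSubgroup.closure_mono ?_
    rintro _ (rfl | rfl)
    exacts [⟨(1, 1), rfl⟩, ⟨(2, 1), rfl⟩]

/-- The image of ∂₂ is the rank-2 free abelian group generated by (1)−(3) and
(2)−(4) (with 4 ≡ 0); hence H₁^R(X) = C₁^R(X)/Im ∂₂ is free abelian of rank 2. -/
theorem zmod4_im_bdry2 :
    bdry2.range = AddSubgroup.closure
        { of (1 : ZMod 4) - of 3, of (2 : ZMod 4) - of 0 } ∧
    Nonempty (bdry2.range ≃+ (Fin 2 → ℤ)) ∧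
    Nonempty ((FreeAbelianGroup (ZMod 4) ⧸ bdry2.range) ≃+ (Fin 2 → ℤ)) := by
  have hπ := ZMod.castHom_surjective (show 2 ∣ 4 by norm_num)
  refine ⟨range_bdry2, ?_, ?_⟩
  · rw [range_bdry2_eq_ker]
    exact nonempty_ker_map_addEquiv hπ (by simp)
  · rw [range_bdry2_eq_ker]
    obtain ⟨e⟩ := nonempty_addEquiv_fin (ZMod.card 2)
    exact ⟨(QuotientAddGroup.quotientKerEquivOfSurjective _ (map_surjective hπ)).trans e⟩
end
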